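/- arXiv:1005.4640 — 5 statements merged into one kernel-verified Lean document; each statement's English description precedes it below -/
import Mathlib

section
/- For every positive integer a and every positive integer n, d_a(n²)·d(n) ≤ d_{2a+2}(n)², where d = d_2 is the ordinary divisor-counting function. -/
/-!
`d_k` is submultiplicative, `d_k(mn) ≤ d_k(m) d_k(n)`: by induction on `k`, since every divisor
of `mn` is a product of a divisor of `m` and a divisor of `n`. This gives `d_a(n²) ≤ d_a(n)²`,
and, since by submultiplicativity every term of `d_{2a}(n) = ∑_{xy = n} d_a(x) d_a(y)` is at
least `d_a(n)`, also `d(n) d_a(n) ≤ d_{2a}(n)`. As `d_k(n)` increases with `k`,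
`d_a(n²) d(n) ≤ d_a(n) · d(n) d_a(n) ≤ d_{2a}(n)² ≤ d_{2a+2}(n)²`.
-/

/-- `dNat k n` is the number of ordered `k`-tuples of positive integers whose product is `n`. -/
noncomputable def dNat (k n : ℕ) : ℕ :=
  Nat.card {f : Fin k → ℕ // (∀ i, 0 < f i) ∧ ∏ i, f i = n}

open Finset ArithmeticFunction
open scoped ArithmeticFunction.zeta

theorem Nat.card_finMulAntidiag_succ (k n : ℕ) :
    #(finMulAntidiag (k + 1) n) = ∑ d ∈ n.divisors, #(finMulAntidiag k d) := by
  rw [← sum_divisorsAntidiagonal' fun _ d => #(finMulAntidiag k d), ← Finset.card_sigma]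
  refine card_nbij' (fun f => ⟨(f 0, ∏ i, Fin.tail f i), Fin.tail f⟩)
    (fun x => Fin.cons x.1.1 x.2) ?_ ?_ ?_ ?_
  · intro f hf
    obtain ⟨rfl, hn⟩ := mem_finMulAntidiag.mp hf
    rw [Fin.prod_univ_succ] at hn
    simp [Fin.prod_univ_succ, Fin.tail, hn, right_ne_zero_of_mul hn]
  · rintro ⟨⟨a, b⟩, g⟩ h
    simp_all [Fin.prod_univ_succ]
  · intro f _
    simp
  · rintro ⟨⟨a, b⟩, g⟩ h
    simp_all

theorem dNat_eq_card_finMulAntidiag (k n : ℕ) : dNat k n = #(Nat.finMulAntidiag k n) := by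
  refine Nat.subtype_card _ fun f => ?_
  rw [Nat.mem_finMulAntidiag]
  constructor
  · rintro ⟨rfl, hn⟩
    exact ⟨fun i => Nat.pos_of_ne_zero (prod_ne_zero_iff.mp hn i (mem_univ i)), rfl⟩
  · rintro ⟨hpos, rfl⟩
    exact ⟨rfl, prod_ne_zero_iff.mpr fun i _ => (hpos i).ne'⟩

theorem dNat_zero_left (n : ℕ) : dNat 0 n = if n = 1 then 1 else 0 := by
  rw [dNat_eq_card_finMulAntidiag]
  split_ifs with hn
  · rw [hn, Nat.finMulAntidiag_one, card_singleton]
  · rw [Nat.finMulAntidiag_zero_left hn, card_empty]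

theorem dNat_succ (k n : ℕ) : dNat (k + 1) n = ∑ d ∈ n.divisors, dNat k d := by
  simp only [dNat_eq_card_finMulAntidiag, Nat.card_finMulAntidiag_succ]

theorem dNat_eq_zeta_pow (k n : ℕ) : dNat k n = (ζ ^ k : ArithmeticFunction ℕ) n := by
  induction k generalizing n with
  | zero => rw [dNat_zero_left, pow_zero, one_apply]
  | succ k ih => simp only [dNat_succ, pow_succ', zeta_mul_apply, ih]

theorem dNat_add (k l n : ℕ) :
    dNat (k + l) n = ∑ x ∈ n.divisorsAntidiagonal, dNat k x.1 * dNat l x.2 := by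
  simp only [dNat_eq_zeta_pow, pow_add, mul_apply]

theorem dNat_two (n : ℕ) : dNat 2 n = #n.divisors := by
  rw [dNat_succ, card_eq_sum_ones]
  refine sum_congr rfl fun d hd => ?_
  simp [dNat_succ, dNat_zero_left, (Nat.pos_of_mem_divisors hd).ne']

theorem dNat_le_dNat_succ (k n : ℕ) : dNat k n ≤ dNat (k + 1) n := by
  rcases eq_or_ne n 0 with rfl | hn
  · simp [dNat_eq_zeta_pow]
  · rw [dNat_succ]
    exact single_le_sum (fun _ _ => Nat.zero_le _) (Nat.mem_divisors_self n hn)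

theorem dNat_le_dNat_of_le {k l : ℕ} (hkl : k ≤ l) (n : ℕ) : dNat k n ≤ dNat l n :=
  monotone_nat_of_le_succ (fun k => dNat_le_dNat_succ k n) hkl

theorem Nat.sum_divisors_mul_le (f : ℕ → ℕ) (m n : ℕ) :
    ∑ d ∈ (m * n).divisors, f d ≤ ∑ x ∈ m.divisors, ∑ y ∈ n.divisors, f (x * y) := by
  rw [divisors_mul, Finset.mul_def, ← sum_product']
  exact sum_image_le_of_nonneg fun _ _ => Nat.zero_le _

theorem dNat_mul_le (k m n : ℕ) : dNat k (m * n) ≤ dNat k m * dNat k n := by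
  induction k generalizing m n with
  | zero =>
    simp only [dNat_zero_left, mul_eq_one]
    split_ifs <;> simp_all
  | succ k ih =>
    rw [dNat_succ, dNat_succ, dNat_succ, sum_mul_sum]
    exact (Nat.sum_divisors_mul_le _ m n).trans
      (sum_le_sum fun x _ => sum_le_sum fun y _ => ih x y)

theorem card_divisors_mul_dNat_le_dNat_add_self (k n : ℕ) :
    #n.divisors * dNat k n ≤ dNat (k + k) n := by
  rw [dNat_add, Nat.sum_divisorsAntidiagonal' fun x y => dNat k x * dNat k y, ← smul_eq_mul,
    ← sum_const]
  refine sum_le_sum fun d hd => ?_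
  conv_lhs => rw [← Nat.div_mul_cancel (Nat.dvd_of_mem_divisors hd)]
  exact dNat_mul_le k (n / d) d

theorem stmt_2_general (a n : ℕ) :
    dNat a (n ^ 2) * dNat 2 n ≤ (dNat (2 * a + 2) n) ^ 2 := by
  have hsq : dNat a (n ^ 2) ≤ dNat a n ^ 2 := by
    simpa only [sq] using dNat_mul_le a n n
  rw [dNat_two]
  calc dNat a (n ^ 2) * #n.divisors ≤ dNat a n ^ 2 * #n.divisors := by gcongr
    _ = dNat a n * (#n.divisors * dNat a n) := by ring
    _ ≤ dNat (a + a) n * dNat (a + a) n := by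
        gcongr
        · exact dNat_le_dNat_of_le (Nat.le_add_right a a) n
        · exact card_divisors_mul_dNat_le_dNat_add_self a n
    _ ≤ dNat (2 * a + 2) n ^ 2 := by
        rw [sq]
        gcongr <;> exact dNat_le_dNat_of_le (by omega) n

theorem stmt_2 (a n : ℕ) (ha : 0 < a) (hn : 0 < n) :
    dNat a (n ^ 2) * dNat 2 n ≤ (dNat (2 * a + 2) n) ^ 2 :=
  stmt_2_general a n
end

section
/- For any complex numbers z₁, z₂ and any real σ > 1/2, the Dirichlet series ∑_{n≥1} d_{z₁}(n)·d_{z₂}(n)/n^{2σ} equals the Euler product over primes p of (1/(2π)) ∫_{-π}^{π} (1 - e^{iθ}/p^σ)^{-z₁} (1 - e^{-iθ}/p^σ)^{-z₂} dθ. -/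
/-!
At a prime `p`, `d_z(p^a)` is the multiset coefficient `z(z+1)⋯(z+a-1)/a!`, so the local factor
`∑ₐ d_{z₁}(p^a) d_{z₂}(p^a) p^{-2σa}` is the Euler factor of the Dirichlet series. Expanding
`(1 - e^{iθ}u)^{-z₁}` and `(1 - e^{-iθ}v)^{-z₂}` into binomial series, which converge absolutely
for `|u|, |v| < 1`, and integrating term by term over the circle, orthogonality of the characters
`e^{i(j-k)θ}` leaves exactly the diagonal `∑ₐ d_{z₁}(p^a) d_{z₂}(p^a) (uv)^a`.

The Euler product needs absolute convergence of `∑ |d_{z₁}(n) d_{z₂}(n)| n^{-2σ}`. For a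
nonnegative multiplicative function, the partial sums are bounded by
`∏_p (1 + ∑_{a ≥ 1} g(p^a)) ≤ exp (∑_p ∑_{a ≥ 1} g(p^a))`, and here the double sum is
`O(∑_p p^{-2σ})`, finite because `2σ > 1`.
-/

open Complex

/-- The generalized divisor function `d_z(n)` for a complex parameter `z`:
multiplicative, with `d_z(p^a) = z(z+1)⋯(z+a-1)/a!`. -/
noncomputable def dC (z : ℂ) (n : ℕ) : ℂ :=
  n.factorization.prod fun _ a => (∏ i ∈ Finset.range a, (z + i)) / (Nat.factorial a)

open Finset
open scoped Real

lemma ascPochhammer_eval_eq_prod_range {R : Type*} [CommSemiring R] (n : ℕ) (r : R) :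
    (ascPochhammer R n).eval r = ∏ i ∈ range n, (r + i) := by
  induction n with
  | zero => simp
  | succ n ih => simp [ascPochhammer_succ_right, ih, prod_range_succ]

lemma Ring.multichoose_eq_prod_range_div_factorial {K : Type*} [Field K] [CharZero K]
    (r : K) (n : ℕ) : Ring.multichoose r n = (∏ i ∈ range n, (r + i)) / n.factorial := by
  have h := Ring.factorial_nsmul_multichoose_eq_ascPochhammer r n
  rw [Polynomial.ascPochhammer_smeval_eq_eval, ascPochhammer_eval_eq_prod_range, nsmul_eq_mul] at h
  rw [← h, mul_div_cancel_left₀ _ (by exact_mod_cast n.factorial_ne_zero)]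

lemma dC_one (z : ℂ) : dC z 1 = 1 := by simp [dC]

lemma dC_prime_pow (z : ℂ) {p : ℕ} (hp : p.Prime) (a : ℕ) :
    dC z (p ^ a) = Ring.multichoose z a := by
  rw [dC, hp.factorization_pow, Finsupp.prod_single_index (by simp),
    Ring.multichoose_eq_prod_range_div_factorial]

lemma dC_mul_of_coprime (z : ℂ) {m n : ℕ} (h : m.Coprime n) :
    dC z (m * n) = dC z m * dC z n := by
  rw [dC, Nat.factorization_mul_of_coprime h,
    Finsupp.prod_add_index_of_disjoint h.disjoint_primeFactors, dC, dC]

namespace Complex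

theorem hasFPowerSeriesOnBall_one_sub_cpow_neg (z : ℂ) :
    HasFPowerSeriesOnBall (fun w ↦ (1 - w) ^ (-z)) (.ofScalars ℂ (Ring.multichoose z)) 0 1 := by
  have hc : (fun n : ℕ ↦ Ring.choose (z + n - 1) n) = Ring.multichoose z :=
    funext fun n ↦ (Ring.multichoose_eq z n).symm
  have hf : (fun w : ℂ ↦ 1 / (1 - w) ^ z) = fun w ↦ (1 - w) ^ (-z) :=
    funext fun w ↦ by rw [cpow_neg, one_div]
  simpa only [hc, hf] using one_div_one_sub_cpow_hasFPowerSeriesOnBall_zero z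

theorem hasSum_multichoose_mul_pow (z : ℂ) {w : ℂ} (hw : ‖w‖ < 1) :
    HasSum (fun n ↦ Ring.multichoose z n * w ^ n) ((1 - w) ^ (-z)) := by
  have := (hasFPowerSeriesOnBall_one_sub_cpow_neg z).hasSum (y := w) <| by
    rw [Metric.mem_eball, edist_zero_right, ← ofReal_norm]
    exact ENNReal.ofReal_lt_one.mpr hw
  simpa [FormalMultilinearSeries.ofScalars_apply_eq, mul_comm] using this

theorem summable_norm_multichoose_mul_pow (z : ℂ) {r : ℝ} (hr0 : 0 ≤ r) (hr : r < 1) :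
    Summable fun n ↦ ‖Ring.multichoose z n‖ * r ^ n := by
  lift r to NNReal using hr0
  have := FormalMultilinearSeries.summable_norm_mul_pow _
    ((ENNReal.coe_lt_one_iff.mpr (by exact_mod_cast hr)).trans_le
      (hasFPowerSeriesOnBall_one_sub_cpow_neg z).r_le)
  simpa [FormalMultilinearSeries.ofScalars_norm] using this

theorem summable_norm_multichoose_mul_multichoose_mul_pow (z₁ z₂ : ℂ) {r : ℝ} (hr0 : 0 ≤ r)
    (hr : r < 1) :
    Summable fun n ↦ ‖Ring.multichoose z₁ n‖ * ‖Ring.multichoose z₂ n‖ * r ^ n := by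
  have hρ0 : 0 ≤ √r := Real.sqrt_nonneg r
  have hρ1 : √r < 1 := (Real.sqrt_lt' one_pos).mpr (by simpa using hr)
  have h := ((summable_norm_multichoose_mul_pow z₁ hρ0 hρ1).mul_of_nonneg
    (summable_norm_multichoose_mul_pow z₂ hρ0 hρ1) (fun _ ↦ by positivity)
    (fun _ ↦ by positivity)).comp_injective (i := fun n ↦ (n, n)) fun m n h ↦ congrArg Prod.fst h
  refine h.congr fun n ↦ ?_
  simp only [Function.comp_apply]
  rw [show r ^ n = √r ^ n * √r ^ n by rw [← mul_pow, Real.mul_self_sqrt hr0]]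
  ring

end Complex

lemma integral_exp_int_mul_mul_I (n : ℤ) :
    ∫ θ in (-π)..π, exp (n * θ * I) = if n = 0 then (2 * π : ℂ) else 0 := by
  split_ifs with hn
  · simp [hn]; ring
  · have h := intervalIntegral.integral_comp_mul_left (a := -π) (b := π)
      (fun t : ℝ ↦ exp (t * I)) (Int.cast_ne_zero.mpr hn : (n : ℝ) ≠ 0)
    simp only [ofReal_mul, ofReal_intCast] at h
    rw [h, mul_neg, integral_exp_mul_I_eq_sin, Real.sin_int_mul_pi]
    simp

theorem intervalIntegral.hasSum_integral_of_norm_le {ι E : Type*} [Countable ι]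
    [NormedAddCommGroup E] [NormedSpace ℝ E] {F : ι → ℝ → E} {f : ℝ → E} {M : ι → ℝ} {a b : ℝ}
    (hF : ∀ i, Continuous (F i)) (hM : Summable M) (hle : ∀ i t, ‖F i t‖ ≤ M i)
    (hf : ∀ t, HasSum (F · t) (f t)) :
    HasSum (fun i ↦ ∫ t in a..b, F i t) (∫ t in a..b, f t) :=
  hasSum_integral_of_dominated_convergence (fun i _ ↦ M i)
    (fun i ↦ (hF i).aestronglyMeasurable) (fun i ↦ .of_forall fun t _ ↦ hle i t)
    (.of_forall fun _ _ ↦ hM) intervalIntegrable_const (.of_forall fun t _ ↦ hf t)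

theorem hasSum_mul_exp_int_mul_I {a b : ℕ → ℂ} {F G : ℝ → ℂ}
    (ha : Summable (‖a ·‖)) (hb : Summable (‖b ·‖))
    (hF : ∀ θ : ℝ, HasSum (fun j ↦ a j * exp (θ * I) ^ j) (F θ))
    (hG : ∀ θ : ℝ, HasSum (fun k ↦ b k * exp (-θ * I) ^ k) (G θ)) (θ : ℝ) :
    HasSum (fun jk : ℕ × ℕ ↦ a jk.1 * b jk.2 * exp (((jk.1 - jk.2 : ℤ) : ℂ) * θ * I))
      (F θ * G θ) := by
  have hsum := summable_mul_of_summable_norm (f := fun j ↦ a j * exp (θ * I) ^ j)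
    (g := fun k ↦ b k * exp (-θ * I) ^ k) (by simpa [norm_pow, norm_exp] using ha)
    (by simpa [norm_pow, norm_exp] using hb)
  have hterm (jk : ℕ × ℕ) : a jk.1 * exp (θ * I) ^ jk.1 * (b jk.2 * exp (-θ * I) ^ jk.2) =
      a jk.1 * b jk.2 * exp (((jk.1 - jk.2 : ℤ) : ℂ) * θ * I) := by
    rw [← Complex.exp_nat_mul, ← Complex.exp_nat_mul,
      show (((jk.1 - jk.2 : ℤ) : ℂ) * θ * I) = jk.1 * (θ * I) + jk.2 * (-θ * I) by push_cast; ring,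
      Complex.exp_add]
    ring
  simpa only [hterm] using (hF θ).mul (hG θ) hsum

-- Parseval's identity for absolutely convergent Fourier series.
theorem hasSum_mul_of_hasSum_exp_mul_I_pow {a b : ℕ → ℂ} {F G : ℝ → ℂ}
    (ha : Summable (‖a ·‖)) (hb : Summable (‖b ·‖))
    (hF : ∀ θ : ℝ, HasSum (fun j ↦ a j * exp (θ * I) ^ j) (F θ))
    (hG : ∀ θ : ℝ, HasSum (fun k ↦ b k * exp (-θ * I) ^ k) (G θ)) :
    HasSum (fun n ↦ a n * b n) (1 / (2 * π) * ∫ θ in (-π)..π, F θ * G θ) := by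
  set T : ℕ × ℕ → ℝ → ℂ := fun jk θ ↦ a jk.1 * b jk.2 * exp (((jk.1 - jk.2 : ℤ) : ℂ) * θ * I)
  have hTcont (jk : ℕ × ℕ) : Continuous (T jk) := by fun_prop
  have hTle (jk : ℕ × ℕ) (θ : ℝ) : ‖T jk θ‖ ≤ ‖a jk.1‖ * ‖b jk.2‖ := by simp [T, norm_exp]
  have hM : Summable fun jk : ℕ × ℕ ↦ ‖a jk.1‖ * ‖b jk.2‖ :=
    ha.mul_of_nonneg hb (fun _ ↦ norm_nonneg _) (fun _ ↦ norm_nonneg _)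
  have hint (jk : ℕ × ℕ) :
      ∫ θ in (-π)..π, T jk θ = a jk.1 * b jk.2 * if jk.1 = jk.2 then (2 * π : ℂ) else 0 := by
    simp only [T, intervalIntegral.integral_const_mul, integral_exp_int_mul_mul_I, sub_eq_zero,
      Nat.cast_inj]
  have hdiag : Function.Injective fun n : ℕ ↦ (n, n) := fun m n h ↦ congrArg Prod.fst h
  have hab : Summable fun n ↦ a n * b n :=
    (summable_mul_of_summable_norm ha hb).comp_injective (f := fun jk : ℕ × ℕ ↦ a jk.1 * b jk.2)
      (i := fun n ↦ (n, n)) hdiag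
  have hoff : HasSum (fun jk : ℕ × ℕ ↦ a jk.1 * b jk.2 * if jk.1 = jk.2 then (2 * π : ℂ) else 0)
      (2 * π * ∑' n, a n * b n) := by
    rw [← hdiag.hasSum_iff]
    · simpa [Function.comp_def, mul_comm] using hab.hasSum.mul_left (2 * π : ℂ)
    · rintro ⟨j, k⟩ hjk
      rw [if_neg fun (h : j = k) ↦ hjk ⟨j, by rw [h]⟩, mul_zero]
  have hI : HasSum (fun jk ↦ ∫ θ in (-π)..π, T jk θ) (∫ θ in (-π)..π, F θ * G θ) :=
    intervalIntegral.hasSum_integral_of_norm_le hTcont hM hTle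
      (hasSum_mul_exp_int_mul_I ha hb hF hG)
  simp only [hint] at hI
  rw [hI.unique hoff, one_div, inv_mul_cancel_left₀ (by simp [Real.pi_ne_zero])]
  exact hab.hasSum

theorem hasSum_integral_one_sub_cpow_mul_one_sub_cpow (z₁ z₂ : ℂ) {u v : ℂ}
    (hu : ‖u‖ < 1) (hv : ‖v‖ < 1) :
    HasSum (fun n ↦ Ring.multichoose z₁ n * Ring.multichoose z₂ n * (u * v) ^ n)
      (1 / (2 * π) * ∫ θ in (-π)..π,
        (1 - exp (θ * I) * u) ^ (-z₁) * (1 - exp (-θ * I) * v) ^ (-z₂)) := by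
  have hexp (x : ℝ) : ‖exp (x * I)‖ = 1 := norm_exp_ofReal_mul_I x
  have key := hasSum_mul_of_hasSum_exp_mul_I_pow
    (a := fun j ↦ Ring.multichoose z₁ j * u ^ j) (b := fun k ↦ Ring.multichoose z₂ k * v ^ k)
    (F := fun θ ↦ (1 - exp (θ * I) * u) ^ (-z₁)) (G := fun θ ↦ (1 - exp (-θ * I) * v) ^ (-z₂))
    (by simpa [norm_pow] using summable_norm_multichoose_mul_pow z₁ (norm_nonneg u) hu)
    (by simpa [norm_pow] using summable_norm_multichoose_mul_pow z₂ (norm_nonneg v) hv)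
    (fun θ ↦ ?_) (fun θ ↦ ?_)
  · simpa only [mul_pow, mul_mul_mul_comm] using key
  · convert hasSum_multichoose_mul_pow z₁ (w := exp (θ * I) * u)
      (by rwa [norm_mul, hexp, one_mul]) using 2 with j
    ring
  · convert hasSum_multichoose_mul_pow z₂ (w := exp (-θ * I) * v)
      (by rwa [← ofReal_neg, norm_mul, hexp, one_mul]) using 2 with k
    ring

theorem Nat.Primes.sum_primesBelow_le_tsum {h : ℕ → ℝ} (hh : ∀ p, 0 ≤ h p)
    (hsum : Summable fun p : Nat.Primes ↦ h p) (N : ℕ) :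
    ∑ p ∈ N.primesBelow, h p ≤ ∑' p : Nat.Primes, h p := by
  have hind : Summable ({p : ℕ | p.Prime}.indicator h) := summable_subtype_iff_indicator.mp hsum
  calc ∑ p ∈ N.primesBelow, h p = ∑ p ∈ N.primesBelow, {p : ℕ | p.Prime}.indicator h p :=
        sum_congr rfl fun p hp ↦ by
          rw [Set.indicator_of_mem
            (show p ∈ {p : ℕ | p.Prime} from Nat.prime_of_mem_primesBelow hp)]
    _ ≤ ∑' p, {p : ℕ | p.Prime}.indicator h p :=
        hind.sum_le_tsum _ fun p _ ↦ Set.indicator_nonneg (fun p _ ↦ hh p) p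
    _ = ∑' p : Nat.Primes, h p := (_root_.tsum_subtype _ _).symm

theorem summable_of_summable_tsum_prime_pow_succ {g : ℕ → ℝ} (hg : ∀ n, 0 ≤ g n)
    (h0 : g 0 = 0) (h1 : g 1 = 1) (hmul : ∀ {m n}, m.Coprime n → g (m * n) = g m * g n)
    (hp : ∀ {p}, p.Prime → Summable fun e ↦ g (p ^ e))
    (hsum : Summable fun p : Nat.Primes ↦ ∑' e, g (p ^ (e + 1))) : Summable g := by
  refine summable_of_sum_range_le (c := Real.exp (∑' p : Nat.Primes, ∑' e, g (p ^ (e + 1))))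
    hg fun N ↦ ?_
  obtain ⟨-, hprod⟩ := EulerProduct.summable_and_hasSum_smoothNumbers_prod_primesBelow_tsum
    h1 hmul (fun hp' ↦ by simpa [abs_of_nonneg (hg _)] using hp hp') N
  have hind : Summable ((N.smoothNumbers).indicator g) :=
    summable_subtype_iff_indicator.mp hprod.summable
  calc ∑ i ∈ range N, g i = ∑ i ∈ range N, (N.smoothNumbers).indicator g i := by
        refine sum_congr rfl fun i hi ↦ ?_
        rcases Nat.eq_zero_or_pos i with rfl | hi0
        · rw [h0, Set.indicator_of_notMem fun h ↦ Nat.ne_zero_of_mem_smoothNumbers h rfl]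
        · rw [Set.indicator_of_mem (Nat.mem_smoothNumbers_of_lt hi0 (mem_range.mp hi))]
    _ ≤ ∑' i, (N.smoothNumbers).indicator g i :=
        hind.sum_le_tsum _ fun i _ ↦ Set.indicator_nonneg (fun i _ ↦ hg i) i
    _ = ∏ p ∈ N.primesBelow, ∑' e, g (p ^ e) := by rw [← _root_.tsum_subtype, hprod.tsum_eq]
    _ ≤ ∏ p ∈ N.primesBelow, Real.exp (∑' e, g (p ^ (e + 1))) := by
        refine prod_le_prod (fun p _ ↦ tsum_nonneg fun e ↦ hg _) fun p hp' ↦ ?_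
        rw [(hp (Nat.prime_of_mem_primesBelow hp')).tsum_eq_zero_add, pow_zero, h1, add_comm]
        exact Real.add_one_le_exp _
    _ = Real.exp (∑ p ∈ N.primesBelow, ∑' e, g (p ^ (e + 1))) := (Real.exp_sum _ _).symm
    _ ≤ _ := Real.exp_le_exp.mpr <| Nat.Primes.sum_primesBelow_le_tsum
        (h := fun p ↦ ∑' e, g (p ^ (e + 1))) (fun p ↦ tsum_nonneg fun e ↦ hg _) hsum N

theorem summable_primes_tsum_mul_rpow_pow_succ {b : ℕ → ℝ} (hb : ∀ n, 0 ≤ b n) {τ : ℝ}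
    (hτ : 1 < τ) (hs : Summable fun n ↦ b n * ((2 : ℝ) ^ (-τ)) ^ n) :
    Summable fun p : Nat.Primes ↦ ∑' n, b (n + 1) * ((p : ℝ) ^ (-τ)) ^ (n + 1) := by
  set s := (2 : ℝ) ^ (-τ)
  have hs0 : 0 < s := by positivity
  have hshift : Summable fun n ↦ b (n + 1) * s ^ n := by
    refine (((summable_nat_add_iff 1).mpr hs).div_const s).congr fun n ↦ ?_
    rw [pow_succ, ← mul_assoc, mul_div_cancel_right₀ _ hs0.ne']
  refine ((Nat.Primes.summable_rpow.mpr (neg_lt_neg hτ)).mul_right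
    (∑' n, b (n + 1) * s ^ n)).of_nonneg_of_le
    (fun p ↦ tsum_nonneg fun n ↦ mul_nonneg (hb _) (by positivity)) fun p ↦ ?_
  set t := (p : ℝ) ^ (-τ)
  have ht0 : 0 ≤ t := by positivity
  have hts : t ≤ s := Real.rpow_le_rpow_of_nonpos (by norm_num) (by exact_mod_cast p.2.two_le)
    (by linarith)
  have hle (n : ℕ) : b (n + 1) * t ^ n ≤ b (n + 1) * s ^ n := by gcongr; exact hb _
  calc ∑' n, b (n + 1) * t ^ (n + 1) = ∑' n, t * (b (n + 1) * t ^ n) := by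
        congr 1; ext n; ring
    _ = t * ∑' n, b (n + 1) * t ^ n := tsum_mul_left
    _ ≤ t * ∑' n, b (n + 1) * s ^ n := mul_le_mul_of_nonneg_left
        ((hshift.of_nonneg_of_le (fun n ↦ mul_nonneg (hb _) (by positivity)) hle).tsum_le_tsum
          hle hshift) ht0

namespace LSeries

lemma term_mul_of_coprime {f : ℕ → ℂ} (hf : ∀ {m n}, m.Coprime n → f (m * n) = f m * f n)
    (s : ℂ) {m n : ℕ} (h : m.Coprime n) : term f s (m * n) = term f s m * term f s n := by
  rcases eq_or_ne m 0 with rfl | hm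
  · simp
  rcases eq_or_ne n 0 with rfl | hn
  · simp
  rw [term_of_ne_zero (mul_ne_zero hm hn), term_of_ne_zero hm, term_of_ne_zero hn, hf h,
    Nat.cast_mul, natCast_mul_natCast_cpow, mul_div_mul_comm]

lemma term_prime_pow (f : ℕ → ℂ) (s : ℂ) {p : ℕ} (hp : p ≠ 0) (e : ℕ) :
    term f s (p ^ e) = f (p ^ e) * ((p : ℂ) ^ s)⁻¹ ^ e := by
  rw [term_of_ne_zero (pow_ne_zero e hp), Nat.cast_pow, ← natCast_cpow_natCast_mul, cpow_nat_mul,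
    div_eq_mul_inv, inv_pow]

end LSeries

open LSeries

lemma dC_mul_dC_mul_of_coprime (z₁ z₂ : ℂ) {m n : ℕ} (h : m.Coprime n) :
    dC z₁ (m * n) * dC z₂ (m * n) = dC z₁ m * dC z₂ m * (dC z₁ n * dC z₂ n) := by
  rw [dC_mul_of_coprime z₁ h, dC_mul_of_coprime z₂ h]; ring

theorem summable_norm_term_dC_mul_dC (z₁ z₂ : ℂ) {s : ℂ} (hs : 1 < s.re) :
    Summable fun n ↦ ‖term (fun n ↦ dC z₁ n * dC z₂ n) s n‖ := by
  have hpow {p : ℕ} (hp : p.Prime) (e : ℕ) : ‖term (fun n ↦ dC z₁ n * dC z₂ n) s (p ^ e)‖ =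
      ‖Ring.multichoose z₁ e‖ * ‖Ring.multichoose z₂ e‖ * ((p : ℝ) ^ (-s.re)) ^ e := by
    rw [term_prime_pow _ _ hp.ne_zero, dC_prime_pow z₁ hp, dC_prime_pow z₂ hp, norm_mul, norm_mul,
      norm_pow, norm_inv, norm_natCast_cpow_of_pos hp.pos, Real.rpow_neg (Nat.cast_nonneg _)]
  have hlt {p : ℕ} (hp : 2 ≤ p) : (p : ℝ) ^ (-s.re) < 1 :=
    Real.rpow_lt_one_of_one_lt_of_neg (by exact_mod_cast hp) (by linarith)
  refine summable_of_summable_tsum_prime_pow_succ (fun _ ↦ norm_nonneg _) (by simp)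
    (by simp [dC_one]) (fun h ↦ ?_) (fun hp ↦ ?_) ?_
  · rw [term_mul_of_coprime (dC_mul_dC_mul_of_coprime z₁ z₂) s h, norm_mul]
  · simp_rw [hpow hp]
    exact summable_norm_multichoose_mul_multichoose_mul_pow z₁ z₂ (by positivity) (hlt hp.two_le)
  · refine (summable_primes_tsum_mul_rpow_pow_succ (fun _ ↦ by positivity) hs
      (summable_norm_multichoose_mul_multichoose_mul_pow z₁ z₂ (by positivity) (hlt le_rfl))).congr
      fun p ↦ tsum_congr fun e ↦ (hpow p.2 _).symm

theorem LSeries_dC_mul_dC_eq_tprod (z₁ z₂ : ℂ) {s : ℂ} (hs : 1 < s.re) :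
    LSeries (fun n ↦ dC z₁ n * dC z₂ n) s = ∏' p : Nat.Primes,
      ∑' e, Ring.multichoose z₁ e * Ring.multichoose z₂ e * ((p : ℂ) ^ s)⁻¹ ^ e := by
  rw [LSeries, ← EulerProduct.eulerProduct_tprod (by simp [dC_one])
    (term_mul_of_coprime (dC_mul_dC_mul_of_coprime z₁ z₂) s)
    (summable_norm_term_dC_mul_dC z₁ z₂ hs) (term_zero _ _)]
  refine tprod_congr fun p ↦ tsum_congr fun e ↦ ?_
  rw [term_prime_pow _ _ p.2.ne_zero, dC_prime_pow z₁ p.2, dC_prime_pow z₂ p.2]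

theorem stmt_4 (z₁ z₂ : ℂ) (σ : ℝ) (hσ : 1 / 2 < σ) :
    ∑' n : ℕ, dC z₁ (n + 1) * dC z₂ (n + 1) / (((n : ℂ) + 1) ^ ((2 * σ : ℝ) : ℂ)) =
      ∏' p : Nat.Primes,
        (1 / (2 * (Real.pi : ℂ))) * ∫ θ in (-Real.pi)..Real.pi,
          (1 - Complex.exp (θ * Complex.I) / ((p : ℕ) : ℂ) ^ ((σ : ℝ) : ℂ)) ^ (-z₁) *
          (1 - Complex.exp (-θ * Complex.I) / ((p : ℕ) : ℂ) ^ ((σ : ℝ) : ℂ)) ^ (-z₂) := by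
  have hs : 1 < ((2 * σ : ℝ) : ℂ).re := by rw [ofReal_re]; linarith
  have hLSeries : ∑' n : ℕ, dC z₁ (n + 1) * dC z₂ (n + 1) / (((n : ℂ) + 1) ^ ((2 * σ : ℝ) : ℂ)) =
      LSeries (fun n ↦ dC z₁ n * dC z₂ n) ((2 * σ : ℝ) : ℂ) := by
    rw [LSeries, (summable_norm_term_dC_mul_dC z₁ z₂ hs).of_norm.tsum_eq_zero_add, term_zero,
      zero_add]
    refine tsum_congr fun n ↦ ?_
    rw [term_of_ne_zero n.succ_ne_zero]
    push_cast; rfl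
  rw [hLSeries, LSeries_dC_mul_dC_eq_tprod z₁ z₂ hs]
  refine tprod_congr fun p ↦ ?_
  have hu : ‖(((p : ℕ) : ℂ) ^ (σ : ℂ))⁻¹‖ < 1 := by
    rw [norm_inv, norm_natCast_cpow_of_pos p.2.pos, ofReal_re]
    exact inv_lt_one_of_one_lt₀ (Real.one_lt_rpow (by exact_mod_cast p.2.one_lt) (by linarith))
  have huu : (((p : ℕ) : ℂ) ^ (σ : ℂ))⁻¹ * (((p : ℕ) : ℂ) ^ (σ : ℂ))⁻¹ =
      (((p : ℕ) : ℂ) ^ ((2 * σ : ℝ) : ℂ))⁻¹ := by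
    rw [← mul_inv, ← cpow_add _ _ (Nat.cast_ne_zero.mpr p.2.ne_zero)]; push_cast; ring_nf
  rw [← huu, (hasSum_integral_one_sub_cpow_mul_one_sub_cpow z₁ z₂ hu hu).tsum_eq]
  simp only [div_eq_mul_inv]
end

section
/- Let 1/2 < σ < 1, let T be large, let 2 ≤ y ≤ z be reals, and let k be a positive integer with k ≤ log T/(3 log z). Then (1/T) ∫_T^{2T} |∑_{y ≤ p ≤ z} p^{-σ-it}|^{2k} dt ≪ k!·(∑_{y ≤ p ≤ z} p^{-2σ})^k + O(T^{-1/3}), where the sums run over primes p. -/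
/-!
Raising `∑_p p^{-s}` to the `k`-th power gives `∑_g n_g^{-s}` over `k`-tuples `g` of primes,
with `n_g = ∏ g_i ≤ N^k` where `N = ⌊z⌋`, so the integrand is `|∑_g n_g^{-σ} e^{-i t log n_g}|²`.
Pairs with `n_g = n_h` contribute the length of the interval times `n_g^{-2σ}`, and by unique
factorisation each `g` has at most `k!` such partners: this is the main term `k! S^k`. Distinct
`n_g ≠ n_h` have `|log n_g - log n_h| ≥ N^{-k}`, so each off-diagonal integral is `O(N^k)`; by
Cauchy–Schwarz `(∑_p p^{-σ})² ≤ N S`, so the off-diagonal part is `O(N^{2k} S^k)`, which is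
`O(T S^k)` once `z^{3k} ≤ T`. The mean value is then at most `3 k! S^k`.
-/

open Complex ComplexConjugate Finset

lemma norm_integral_exp_mul_I_le {ω : ℝ} (hω : ω ≠ 0) (T₁ T₂ : ℝ) :
    ‖∫ t in T₁..T₂, exp (ω * t * I)‖ ≤ 2 / |ω| := by
  have hc : (ω : ℂ) * I ≠ 0 := mul_ne_zero (ofReal_ne_zero.2 hω) I_ne_zero
  have hunit : ∀ t : ℝ, ‖exp (ω * I * t)‖ = 1 := fun t => by
    rw [mul_right_comm, ← ofReal_mul, norm_exp_ofReal_mul_I]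
  simp_rw [mul_right_comm _ _ I]
  rw [integral_exp_mul_complex hc, norm_div, norm_mul, norm_I, mul_one, norm_real,
    Real.norm_eq_abs]
  gcongr
  calc _ ≤ ‖exp (ω * I * T₂)‖ + ‖exp (ω * I * T₁)‖ := norm_sub_le _ _
    _ = 2 := by rw [hunit, hunit]; norm_num

section SeparatedFrequencies

variable {ι : Type*} (s : Finset ι) (a : ι → ℂ) (ω : ι → ℝ)

lemma ofReal_norm_sum_mul_exp_sq (t : ℝ) :
    ((‖∑ i ∈ s, a i * exp (ω i * t * I)‖ ^ 2 : ℝ) : ℂ)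
      = ∑ i ∈ s, ∑ j ∈ s, a i * conj (a j) * exp ((ω i - ω j : ℝ) * t * I) := by
  push_cast
  rw [← mul_conj', map_sum, sum_mul_sum]
  refine sum_congr rfl fun i _ => sum_congr rfl fun j _ => ?_
  rw [map_mul, ← exp_conj, map_mul, map_mul, conj_ofReal, conj_ofReal, conj_I, sub_mul,
    sub_mul, sub_eq_add_neg, exp_add]
  ring_nf

theorem integral_norm_sum_mul_exp_sq_le {L : ℝ} (hL : 0 ≤ L)
    (hsep : ∀ i ∈ s, ∀ j ∈ s, ω i ≠ ω j → 1 ≤ L * |ω i - ω j|) {T₁ T₂ : ℝ} (hT : T₁ ≤ T₂) :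
    ∫ t in T₁..T₂, ‖∑ i ∈ s, a i * exp (ω i * t * I)‖ ^ 2
      ≤ (T₂ - T₁) * ∑ i ∈ s, ∑ j ∈ s with ω i = ω j, ‖a i‖ * ‖a j‖
        + 2 * L * (∑ i ∈ s, ‖a i‖) ^ 2 := by
  have hpair : ∀ i ∈ s, ∀ j ∈ s, ‖∫ t in T₁..T₂, exp ((ω i - ω j : ℝ) * t * I)‖
      ≤ (if ω i = ω j then T₂ - T₁ else 0) + 2 * L := by
    intro i hi j hj
    split_ifs with h
    · simp only [h, sub_self, ofReal_zero, zero_mul, exp_zero, intervalIntegral.integral_const,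
        real_smul, mul_one, norm_real, Real.norm_eq_abs, abs_of_nonneg (sub_nonneg.2 hT)]
      linarith
    · have hne : ω i - ω j ≠ 0 := sub_ne_zero.2 h
      have := hsep i hi j hj h
      refine (norm_integral_exp_mul_I_le hne T₁ T₂).trans ?_
      rw [zero_add, div_le_iff₀ (abs_pos.2 hne)]
      linarith
  calc ∫ t in T₁..T₂, ‖∑ i ∈ s, a i * exp (ω i * t * I)‖ ^ 2
      ≤ ‖((∫ t in T₁..T₂, ‖∑ i ∈ s, a i * exp (ω i * t * I)‖ ^ 2 : ℝ) : ℂ)‖ := by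
        rw [norm_real, Real.norm_eq_abs]; exact le_abs_self _
    _ = ‖∑ i ∈ s, ∑ j ∈ s,
          a i * conj (a j) * ∫ t in T₁..T₂, exp ((ω i - ω j : ℝ) * t * I)‖ := by
        rw [← intervalIntegral.integral_ofReal]
        simp_rw [ofReal_norm_sum_mul_exp_sq]
        rw [intervalIntegral.integral_finsetSum fun i _ =>
          (by fun_prop : Continuous _).intervalIntegrable _ _]
        refine congrArg _ (sum_congr rfl fun i _ => ?_)
        rw [intervalIntegral.integral_finsetSum fun j _ =>
          (by fun_prop : Continuous _).intervalIntegrable _ _]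
        simp_rw [intervalIntegral.integral_const_mul]
    _ ≤ ∑ i ∈ s, ∑ j ∈ s, ‖a i‖ * ‖a j‖ * ((if ω i = ω j then T₂ - T₁ else 0) + 2 * L) := by
        refine (norm_sum_le _ _).trans (sum_le_sum fun i hi => (norm_sum_le _ _).trans
          (sum_le_sum fun j hj => ?_))
        rw [norm_mul, norm_mul, norm_conj]
        gcongr
        exact hpair i hi j hj
    _ = _ := by
        simp_rw [mul_add, sum_add_distrib, sum_filter, mul_ite, mul_zero, mul_sum, sq, sum_mul_sum]
        congr 1
        · refine sum_congr rfl fun i _ => sum_congr rfl fun j _ => ?_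
          split_ifs <;> ring
        · simp_rw [mul_sum, mul_comm (2 * L)]

end SeparatedFrequencies

lemma one_le_mul_abs_log_sub_log {m n M : ℕ} (hm : 0 < m) (hn : 0 < n) (hmM : m ≤ M) (hnM : n ≤ M)
    (hmn : m ≠ n) : 1 ≤ (M : ℝ) * |Real.log m - Real.log n| := by
  wlog h : m < n generalizing m n
  · rw [abs_sub_comm]
    exact this hn hm hnM hmM hmn.symm (lt_of_le_of_ne (not_lt.1 h) hmn.symm)
  have hm' : (0 : ℝ) < m := by exact_mod_cast hm
  have hmn' : (m : ℝ) + 1 ≤ n := by exact_mod_cast h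
  have hM : (n : ℝ) ≤ M := by exact_mod_cast hnM
  -- `log (n / m) ≥ 1 - m / n ≥ 1 / n`
  have hlog := Real.one_sub_inv_le_log_of_pos (x := n / m) (by positivity)
  rw [Real.log_div (by positivity) hm'.ne', inv_div] at hlog
  rw [abs_sub_comm, abs_of_nonneg (hlog.trans' ?_)]
  · calc (1 : ℝ) = n * (1 / n) := by field_simp
      _ ≤ M * (1 - m / n) := by
        gcongr
        rw [le_sub_iff_add_le, ← add_div, div_le_one (by positivity)]
        linarith
      _ ≤ _ := by gcongr
  · rw [sub_nonneg, div_le_one (by positivity)]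
    linarith

lemma prod_natCast_cpow {ι : Type*} (s : Finset ι) (f : ι → ℕ) (w : ℂ) :
    ∏ i ∈ s, (f i : ℂ) ^ w = ((∏ i ∈ s, f i : ℕ) : ℂ) ^ w := by
  induction s using Finset.cons_induction with
  | empty => simp
  | cons i s hi ih => rw [prod_cons, prod_cons, ih, Nat.cast_mul, natCast_mul_natCast_cpow]

lemma natCast_cpow_neg_ofReal_add_mul_I {n : ℕ} (hn : 0 < n) (σ t : ℝ) :
    (n : ℂ) ^ (-((σ : ℂ) + t * I)) = ((n : ℝ) ^ (-σ) : ℝ) * exp (-Real.log n * t * I) := by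
  have hn' : (n : ℂ) ≠ 0 := by exact_mod_cast hn.ne'
  rw [neg_add, cpow_add _ _ hn', cpow_def_of_ne_zero hn' (-(t * I)), ← natCast_log,
    ofReal_cpow (Nat.cast_nonneg n)]
  push_cast
  ring_nf

lemma exists_perm_eq_comp_of_prod_eq {k : ℕ} {g h : Fin k → ℕ} (hg : ∀ i, (g i).Prime)
    (hh : ∀ i, (h i).Prime) (hgh : ∏ i, g i = ∏ i, h i) :
    ∃ π : Equiv.Perm (Fin k), h = g ∘ π := by
  have hper : (List.ofFn g).Perm (List.ofFn h) :=
    (Nat.primeFactorsList_unique (by rw [List.prod_ofFn]) (by simpa using hg)).trans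
      (Nat.primeFactorsList_unique (by rw [List.prod_ofFn, hgh]) (by simpa using hh)).symm
  have hsorted : g ∘ Tuple.sort g = h ∘ Tuple.sort h := by
    refine List.ofFn_injective (List.Perm.eq_of_sortedLE (Tuple.monotone_sort g).sortedLE_ofFn
      (Tuple.monotone_sort h).sortedLE_ofFn ?_)
    exact ((Tuple.sort g).ofFn_comp_perm g).trans
      (hper.trans ((Tuple.sort h).ofFn_comp_perm h).symm)
  refine ⟨(Tuple.sort h)⁻¹.trans (Tuple.sort g), funext fun x => ?_⟩
  simpa using congrFun hsorted.symm ((Tuple.sort h)⁻¹ x)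

lemma card_filter_prod_eq_le_factorial {k : ℕ} {P : Finset ℕ} (hP : ∀ p ∈ P, p.Prime)
    {g : Fin k → ℕ} (hg : ∀ i, (g i).Prime) :
    #{h ∈ Fintype.piFinset fun _ : Fin k => P | ∏ i, h i = ∏ i, g i} ≤ k.factorial := by
  calc _ ≤ #(univ : Finset (Equiv.Perm (Fin k))) := card_le_card_of_surjOn (g ∘ ·) ?_
    _ = k.factorial := by simp [Fintype.card_perm]
  intro h hh
  simp only [coe_filter, Fintype.mem_piFinset, Set.mem_ofPred_eq] at hh
  obtain ⟨π, hπ⟩ := exists_perm_eq_comp_of_prod_eq hg (fun i => hP _ (hh.1 i)) hh.2.symm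
  exact ⟨π, mem_coe.2 (mem_univ π), hπ.symm⟩

lemma sum_piFinset_natCast_prod_rpow (P : Finset ℕ) (k : ℕ) (r : ℝ) :
    ∑ g ∈ Fintype.piFinset (fun _ : Fin k => P), ((∏ i, g i : ℕ) : ℝ) ^ r
      = (∑ p ∈ P, (p : ℝ) ^ r) ^ k := by
  rw [sum_pow']
  refine sum_congr rfl fun g _ => ?_
  push_cast
  exact (Real.finsetProd_rpow _ _ (fun i _ => Nat.cast_nonneg _) r).symm

lemma rpow_neg_sq {x : ℝ} (hx : 0 ≤ x) (σ : ℝ) : (x ^ (-σ)) ^ 2 = x ^ (-(2 * σ)) := by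
  rw [← Real.rpow_mul_natCast hx]
  ring_nf

lemma sq_sum_rpow_neg_le {P : Finset ℕ} {N : ℕ} (hP : ∀ p ∈ P, p.Prime ∧ p ≤ N) (σ : ℝ) :
    (∑ p ∈ P, (p : ℝ) ^ (-σ)) ^ 2 ≤ N * ∑ p ∈ P, (p : ℝ) ^ (-(2 * σ)) := by
  have hcard : #P ≤ N := by
    simpa using card_le_card fun p hp => mem_Icc.2 ⟨(hP p hp).1.one_lt.le, (hP p hp).2⟩
  calc (∑ p ∈ P, (p : ℝ) ^ (-σ)) ^ 2 ≤ #P * ∑ p ∈ P, ((p : ℝ) ^ (-σ)) ^ 2 :=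
        sq_sum_le_card_mul_sum_sq
    _ ≤ N * ∑ p ∈ P, (p : ℝ) ^ (-(2 * σ)) := by
        simp_rw [rpow_neg_sq (Nat.cast_nonneg _)]
        gcongr

theorem integral_norm_sum_prime_cpow_pow_le {P : Finset ℕ} {N : ℕ}
    (hP : ∀ p ∈ P, p.Prime ∧ p ≤ N) (σ : ℝ) (k : ℕ) {T₁ T₂ : ℝ} (hT : T₁ ≤ T₂) :
    ∫ t in T₁..T₂, ‖∑ p ∈ P, (p : ℂ) ^ (-((σ : ℂ) + t * I))‖ ^ (2 * k)
      ≤ ((T₂ - T₁) * k.factorial + 2 * N ^ (2 * k)) * (∑ p ∈ P, (p : ℝ) ^ (-(2 * σ))) ^ k := by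
  set Pk := Fintype.piFinset fun _ : Fin k => P
  set n : (Fin k → ℕ) → ℕ := fun g => ∏ i, g i with hn
  set S := ∑ p ∈ P, (p : ℝ) ^ (-(2 * σ))
  have hPk : ∀ g ∈ Pk, ∀ i, (g i).Prime ∧ g i ≤ N :=
    fun g hg i => hP _ (Fintype.mem_piFinset.1 hg i)
  have hn_pos : ∀ g ∈ Pk, 0 < n g := fun g hg => prod_pos fun i _ => (hPk g hg i).1.pos
  have hn_le : ∀ g ∈ Pk, n g ≤ N ^ k := fun g hg => by
    simpa using prod_le_prod' fun i (_ : i ∈ univ) => (hPk g hg i).2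
  have hlog_eq : ∀ g ∈ Pk, ∀ h ∈ Pk,
      (-Real.log (n g) = -Real.log (n h) ↔ n h = n g) := fun g hg h hh => by
    rw [neg_inj, Real.log_injOn_pos.eq_iff (by simpa using hn_pos g hg)
      (by simpa using hn_pos h hh), Nat.cast_inj, eq_comm]
  have hexpand : ∀ t : ℝ, ‖∑ p ∈ P, (p : ℂ) ^ (-((σ : ℂ) + t * I))‖ ^ (2 * k)
      = ‖∑ g ∈ Pk, (((n g : ℝ) ^ (-σ) : ℝ) : ℂ) * exp ((-Real.log (n g) : ℝ) * t * I)‖ ^ 2 := by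
    intro t
    rw [pow_mul', ← norm_pow, sum_pow']
    congr 2
    refine sum_congr rfl fun g hg => ?_
    rw [prod_natCast_cpow, natCast_cpow_neg_ofReal_add_mul_I (hn_pos g hg)]
    push_cast
    rfl
  have hnorm : ∀ g, ‖(((n g : ℝ) ^ (-σ) : ℝ) : ℂ)‖ = (n g : ℝ) ^ (-σ) := fun g => by
    rw [norm_real, Real.norm_of_nonneg (by positivity)]
  have hdiag : ∑ g ∈ Pk, ∑ h ∈ Pk with -Real.log (n g) = -Real.log (n h),
      ‖(((n g : ℝ) ^ (-σ) : ℝ) : ℂ)‖ * ‖(((n h : ℝ) ^ (-σ) : ℝ) : ℂ)‖ ≤ k.factorial * S ^ k := by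
    calc _ = ∑ g ∈ Pk, #{h ∈ Pk | n h = n g} * (n g : ℝ) ^ (-(2 * σ)) := by
          refine sum_congr rfl fun g hg => ?_
          rw [filter_congr (hlog_eq g hg), ← nsmul_eq_mul, ← sum_const]
          refine sum_congr rfl fun h hh => ?_
          rw [hnorm, hnorm, (mem_filter.1 hh).2, ← sq, rpow_neg_sq (Nat.cast_nonneg _)]
      _ ≤ ∑ g ∈ Pk, k.factorial * (n g : ℝ) ^ (-(2 * σ)) := by
          gcongr with g hg
          exact_mod_cast card_filter_prod_eq_le_factorial (fun p hp => (hP p hp).1)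
            (fun i => (hPk g hg i).1)
      _ = k.factorial * S ^ k := by rw [← mul_sum, hn, sum_piFinset_natCast_prod_rpow]
  have hoff : (∑ g ∈ Pk, ‖(((n g : ℝ) ^ (-σ) : ℝ) : ℂ)‖) ^ 2 ≤ N ^ k * S ^ k := by
    simp_rw [hnorm, hn, Pk, sum_piFinset_natCast_prod_rpow, ← pow_mul, mul_comm _ 2, pow_mul,
      ← mul_pow]
    exact pow_le_pow_left₀ (by positivity) (sq_sum_rpow_neg_le hP σ) k
  rw [intervalIntegral.integral_congr fun t _ => hexpand t]
  refine (integral_norm_sum_mul_exp_sq_le Pk _ _ (by positivity : (0 : ℝ) ≤ N ^ k) ?_ hT).trans ?_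
  · intro g hg h hh hne
    have hne' : n g ≠ n h := fun e => hne (by rw [e])
    rw [neg_sub_neg, abs_sub_comm]
    exact_mod_cast one_le_mul_abs_log_sub_log (hn_pos g hg) (hn_pos h hh) (hn_le g hg)
      (hn_le h hh) hne'
  · calc _ ≤ (T₂ - T₁) * (k.factorial * S ^ k) + 2 * N ^ k * (N ^ k * S ^ k) := by
          gcongr
      _ = _ := by ring

theorem stmt_10 :
    ∃ C > (0 : ℝ), ∃ T₀ : ℝ, ∀ T : ℝ, T₀ ≤ T → ∀ σ : ℝ, 1 / 2 < σ → σ < 1 →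
      ∀ y z : ℝ, 2 ≤ y → y ≤ z → ∀ k : ℕ, 1 ≤ k →
        (k : ℝ) ≤ Real.log T / (3 * Real.log z) →
      (1 / T) * ∫ t in T..(2 * T),
          (‖∑ p ∈ Finset.filter Nat.Prime (Finset.Icc ⌈y⌉₊ ⌊z⌋₊),
            ((p : ℂ) ^ (-((σ : ℂ) + t * Complex.I)))‖) ^ (2 * k)
        ≤ C * ((Nat.factorial k : ℝ) *
            (∑ p ∈ Finset.filter Nat.Prime (Finset.Icc ⌈y⌉₊ ⌊z⌋₊),
              (p : ℝ) ^ (-(2 * σ))) ^ k + T ^ (-(1 / 3 : ℝ))) := by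
  refine ⟨3, by norm_num, 1, fun T hT σ _ _ y z hy hyz k _ hkT => ?_⟩
  have hT0 : 0 < T := by linarith
  have hz : 1 < z := by linarith
  have hP : ∀ p ∈ Finset.filter Nat.Prime (Finset.Icc ⌈y⌉₊ ⌊z⌋₊), p.Prime ∧ p ≤ ⌊z⌋₊ :=
    fun p hp => ⟨(mem_filter.1 hp).2, (mem_Icc.1 (mem_filter.1 hp).1).2⟩
  have hzT : (⌊z⌋₊ : ℝ) ^ (2 * k) ≤ T * k.factorial := by
    have hz3 : z ^ (3 * k) ≤ T := by
      rw [le_div_iff₀ (by have := Real.log_pos hz; positivity)] at hkT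
      rw [← Real.log_le_log_iff (by positivity) hT0, Real.log_pow]
      push_cast
      linarith
    calc (⌊z⌋₊ : ℝ) ^ (2 * k) ≤ z ^ (3 * k) :=
          (pow_le_pow_left₀ (by positivity) (Nat.floor_le (by positivity)) _).trans
            (pow_le_pow_right₀ hz.le (by omega))
      _ ≤ T := hz3
      _ ≤ T * k.factorial := le_mul_of_one_le_right hT0.le (Nat.one_le_cast.2 k.factorial_pos)
  set S := ∑ p ∈ Finset.filter Nat.Prime (Finset.Icc ⌈y⌉₊ ⌊z⌋₊), (p : ℝ) ^ (-(2 * σ))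
  calc _ ≤ (1 / T) * ((T * k.factorial + 2 * (⌊z⌋₊ : ℝ) ^ (2 * k)) * S ^ k) := by
        gcongr
        exact (integral_norm_sum_prime_cpow_pow_le hP σ k (by linarith)).trans_eq
          (by rw [two_mul, add_sub_cancel_right])
    _ ≤ (1 / T) * ((T * k.factorial + 2 * (T * k.factorial)) * S ^ k) := by gcongr
    _ = 3 * (k.factorial * S ^ k) := by field_simp; ring
    _ ≤ 3 * (k.factorial * S ^ k + T ^ (-(1 / 3 : ℝ))) := by
        gcongr
        exact le_add_of_nonneg_right (by positivity)
end

section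
/- Let H be the commutative ring generated over ℤ by symbols x(n) for n ≥ 1, subject to x(1) = 1 and x(m)x(n) = ∑_{d | gcd(m,n)} x(mn/d²). Write x(n₁)···x(n_r) = ∑_{m | n₁···n_r} b_m(n₁,...,n_r) x(m). Then the integer coefficients satisfy b₁(m₁n₁,...,m_r n_r) = b₁(m₁,...,m_r)·b₁(n₁,...,n_r) whenever gcd(m₁···m_r, n₁···n_r) = 1, and b₁(p^{a₁},...,p^{a_r}) = 0 whenever a₁ + ··· + a_r is odd. -/
/-- `heckeB L m` is the coefficient `b_m(n₁,…,n_r)` of `x(m)` in the expansion of the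
product `x(n₁)⋯x(n_r)` in the Hecke ring generated by symbols `x(n)` subject to
`x(1) = 1` and `x(m)x(n) = ∑_{d ∣ gcd(m,n)} x(mn/d²)`, computed by multiplying
left to right. -/
def heckeB : List ℕ → ℕ → ℤ
  | [], m => if m = 1 then 1 else 0
  | n :: L, m => ∑ m' ∈ (L.prod).divisors,
      heckeB L m' * (((Nat.gcd n m').divisors.filter fun d => n * m' = m * (d * d)).card : ℤ)

/-!
Both statements are read off the recursion for `heckeB`. The coefficient of `x(m)` in
`x(n) x(m')` counts the `d ∣ gcd(n, m')` with `n m' = m d²`; for coprime data such an equation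
splits uniquely into one equation per coprime part, so these coefficients are multiplicative, and
by induction over the factors so is the whole expansion. For prime powers, `x(p^a) x(p^k)` only
involves the `x(p^(a + k - 2j))`, so the parity of the total exponent is preserved and `x(1)`
cannot occur when `a₁ + ⋯ + a_r` is odd.
-/

open Finset

namespace Nat.Coprime

theorem mul_eq_mul_iff {x₁ x₂ y₁ y₂ : ℕ} (h₁ : Coprime x₁ y₂) (h₂ : Coprime y₁ x₂) :
    x₁ * x₂ = y₁ * y₂ ↔ x₁ = y₁ ∧ x₂ = y₂ := by
  refine ⟨fun e => ?_, fun ⟨e₁, e₂⟩ => e₁ ▸ e₂ ▸ rfl⟩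
  have e₁ : x₁ = y₁ :=
    Nat.dvd_antisymm (h₁.dvd_of_dvd_mul_right ⟨x₂, e.symm⟩) (h₂.dvd_of_dvd_mul_right ⟨y₂, e⟩)
  subst e₁
  refine ⟨rfl, ?_⟩
  rcases Nat.eq_zero_or_pos x₁ with rfl | hx₁
  · rw [Nat.coprime_zero_left] at h₁ h₂
    rw [h₁, h₂]
  · exact Nat.eq_of_mul_eq_mul_left hx₁ e

theorem sum_divisors_mul_eq_sum_sum {β : Type*} [AddCommMonoid β] {m n : ℕ} (h : Coprime m n)
    (f : ℕ → β) :
    ∑ k ∈ (m * n).divisors, f k = ∑ i ∈ m.divisors, ∑ j ∈ n.divisors, f (i * j) := by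
  rw [Nat.divisors_mul, Finset.mul_def, Finset.sum_image h.mul_injOn_divisors, Finset.sum_product]

theorem gcd_mul_mul {a b m₁ m₂ : ℕ} (h₁ : Coprime a m₂) (h₂ : Coprime b m₁)
    (hm : Coprime m₁ m₂) : Nat.gcd (a * b) (m₁ * m₂) = Nat.gcd a m₁ * Nat.gcd b m₂ := by
  rw [hm.gcd_mul, h₂.gcd_mul_right_cancel, h₁.gcd_mul_left_cancel]

end Nat.Coprime

/-- `heckeMulCoeff n m' m` is the coefficient of `x(m)` in `x(n) x(m')`. -/
def heckeMulCoeff (n m' m : ℕ) : ℕ :=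
  ((Nat.gcd n m').divisors.filter fun d => n * m' = m * (d * d)).card

theorem heckeB_cons (n : ℕ) (L : List ℕ) (m : ℕ) :
    heckeB (n :: L) m = ∑ m' ∈ L.prod.divisors, heckeB L m' * heckeMulCoeff n m' m :=
  rfl

theorem heckeMulCoeff_mul_mul {a b m₁' m₂' m₁ m₂ : ℕ}
    (h : Nat.Coprime (a * m₁' * m₁) (b * m₂' * m₂)) :
    heckeMulCoeff (a * b) (m₁' * m₂') (m₁ * m₂) =
      heckeMulCoeff a m₁' m₁ * heckeMulCoeff b m₂' m₂ := by
  have ha : a ∣ a * m₁' * m₁ := Dvd.intro _ (mul_assoc _ _ _).symm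
  have hb : b ∣ b * m₂' * m₂ := Dvd.intro _ (mul_assoc _ _ _).symm
  have hm₁' : m₁' ∣ a * m₁' * m₁ := dvd_mul_of_dvd_left (dvd_mul_left _ _) _
  have hm₂' : m₂' ∣ b * m₂' * m₂ := dvd_mul_of_dvd_left (dvd_mul_left _ _) _
  have hgcd : Nat.Coprime (a.gcd m₁') (b.gcd m₂') :=
    h.of_dvd ((Nat.gcd_dvd_left _ _).trans ha) ((Nat.gcd_dvd_left _ _).trans hb)
  rw [heckeMulCoeff, heckeMulCoeff, heckeMulCoeff,
    Nat.Coprime.gcd_mul_mul (h.of_dvd ha hm₂') (h.of_dvd hm₁' hb).symm (h.of_dvd hm₁' hm₂'),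
    card_filter, card_filter, card_filter, hgcd.sum_divisors_mul_eq_sum_sum, sum_mul_sum]
  refine sum_congr rfl fun d₁ hd₁ => sum_congr rfl fun d₂ hd₂ => ?_
  replace hd₁ := ((Nat.dvd_of_mem_divisors hd₁).trans (Nat.gcd_dvd_left _ _)).trans ha
  replace hd₂ := ((Nat.dvd_of_mem_divisors hd₂).trans (Nat.gcd_dvd_left _ _)).trans hb
  have c₁ : Nat.Coprime (a * m₁') (m₂ * (d₂ * d₂)) := by
    have hx : a * m₁' ∣ a * m₁' * m₁ := dvd_mul_right _ _
    exact (h.of_dvd hx (dvd_mul_left _ _)).mul_right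
      ((h.of_dvd hx hd₂).mul_right (h.of_dvd hx hd₂))
  have c₂ : Nat.Coprime (m₁ * (d₁ * d₁)) (b * m₂') := by
    have hy : b * m₂' ∣ b * m₂' * m₂ := dvd_mul_right _ _
    exact (h.of_dvd (dvd_mul_left _ _) hy).mul_left
      ((h.of_dvd hd₁ hy).mul_left (h.of_dvd hd₁ hy))
  rw [show a * b * (m₁' * m₂') = a * m₁' * (b * m₂') by ring,
    show m₁ * m₂ * (d₁ * d₂ * (d₁ * d₂)) = m₁ * (d₁ * d₁) * (m₂ * (d₂ * d₂)) by ring,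
    ite_zero_mul_ite_zero, mul_one]
  simp only [c₁.mul_eq_mul_iff c₂]

theorem heckeB_zipWith_mul : ∀ (M N : List ℕ), M.length = N.length →
    Nat.Coprime M.prod N.prod → ∀ {m₁ m₂ : ℕ}, m₁ ∣ M.prod → m₂ ∣ N.prod →
    heckeB (List.zipWith (· * ·) M N) (m₁ * m₂) = heckeB M m₁ * heckeB N m₂
  | [], [], _, _, m₁, m₂, h₁, h₂ => by
    rw [List.prod_nil, Nat.dvd_one] at h₁ h₂
    simp [heckeB, h₁, h₂]
  | a :: M, b :: N, hlen, hcop, m₁, m₂, h₁, h₂ => by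
    rw [List.length_cons, List.length_cons, Nat.add_right_cancel_iff] at hlen
    simp only [List.prod_cons] at hcop h₁ h₂
    have hcop' : Nat.Coprime M.prod N.prod :=
      hcop.of_dvd (dvd_mul_left _ _) (dvd_mul_left _ _)
    rw [List.zipWith_cons_cons, heckeB_cons, heckeB_cons, heckeB_cons,
      ← List.prod_mul_prod_eq_prod_zipWith_of_length_eq M N hlen,
      hcop'.sum_divisors_mul_eq_sum_sum, sum_mul_sum]
    refine sum_congr rfl fun m₁' hm₁' => sum_congr rfl fun m₂' hm₂' => ?_
    have hm₁' := Nat.dvd_of_mem_divisors hm₁'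
    have hm₂' := Nat.dvd_of_mem_divisors hm₂'
    have hcube : Nat.Coprime (a * m₁' * m₁) (b * m₂' * m₂) := by
      refine (hcop.pow 3 3).of_dvd ?_ ?_ <;> rw [pow_three']
      · exact mul_dvd_mul (mul_dvd_mul (dvd_mul_right _ _) (hm₁'.mul_left _)) h₁
      · exact mul_dvd_mul (mul_dvd_mul (dvd_mul_right _ _) (hm₂'.mul_left _)) h₂
    rw [heckeB_zipWith_mul M N hlen hcop' hm₁' hm₂', heckeMulCoeff_mul_mul hcube]
    push_cast
    ring

theorem exists_dvd_of_heckeMulCoeff_ne_zero {n m' m : ℕ} (h : heckeMulCoeff n m' m ≠ 0) :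
    ∃ d, d ∣ n ∧ n * m' = m * (d * d) := by
  obtain ⟨d, hd⟩ := Finset.card_ne_zero.mp h
  rw [mem_filter, Nat.mem_divisors] at hd
  exact ⟨d, hd.1.1.trans (Nat.gcd_dvd_left _ _), hd.2⟩

theorem heckeB_map_pow_ne_zero {p : ℕ} (hp : p.Prime) : ∀ (A : List ℕ) {m : ℕ},
    heckeB (A.map (p ^ ·)) m ≠ 0 → ∃ k, m = p ^ k ∧ Even (A.sum + k)
  | [], m, h => by
    have hm : m = 1 := by simpa [heckeB] using h
    exact ⟨0, by simpa using hm, by simp⟩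
  | a :: A, m, h => by
    rw [List.map_cons, heckeB_cons] at h
    obtain ⟨m', -, hne⟩ := exists_ne_zero_of_sum_ne_zero h
    obtain ⟨hB, hcoeff⟩ := mul_ne_zero_iff.mp hne
    obtain ⟨k, rfl, hk⟩ := heckeB_map_pow_ne_zero hp A hB
    obtain ⟨d, hd, e⟩ := exists_dvd_of_heckeMulCoeff_ne_zero (Int.natCast_ne_zero.mp hcoeff)
    obtain ⟨j, -, rfl⟩ := (Nat.dvd_prime_pow hp).1 hd
    rw [← pow_add, ← pow_add] at e
    obtain ⟨t, -, rfl⟩ := (Nat.dvd_prime_pow hp).1 (Dvd.intro _ e.symm)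
    have hexp : a + k = t + (j + j) := Nat.pow_right_injective hp.two_le (by simpa [pow_add] using e)
    refine ⟨t, rfl, ?_⟩
    rw [Nat.even_iff] at hk
    rw [List.sum_cons, Nat.even_iff]
    omega

theorem stmt_11 :
    (∀ M N : List ℕ, M.length = N.length → (∀ n ∈ M, 0 < n) → (∀ n ∈ N, 0 < n) →
      Nat.Coprime M.prod N.prod →
      heckeB (List.zipWith (· * ·) M N) 1 = heckeB M 1 * heckeB N 1) ∧
    (∀ p : ℕ, p.Prime → ∀ A : List ℕ, Odd A.sum →
      heckeB (A.map (p ^ ·)) 1 = 0) := by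
  constructor
  · intro M N hlen _ _ hcop
    simpa using heckeB_zipWith_mul M N hlen hcop (one_dvd _) (one_dvd _)
  · intro p hp A hodd
    by_contra h
    obtain ⟨k, hk, heven⟩ := heckeB_map_pow_ne_zero hp A h
    obtain rfl : k = 0 := (Nat.pow_eq_one.mp hk.symm).resolve_left hp.one_lt.ne'
    exact Nat.not_even_iff_odd.mpr hodd heven
end

section
/- Let k be a positive integer, 2 ≤ y ≤ z real, and (α(p))_p real numbers indexed by primes. Then ∑_{y ≤ p₁,...,p_{2k} ≤ z} α(p₁)···α(p_{2k})·b₁(p₁,...,p_{2k}) ≤ 2^{2k}·(2k)!/k! · (∑_{y ≤ p ≤ z} α(p)²)^k, where b₁ is the coefficient of x(1) in the Hecke-ring expansion of x(p₁)···x(p_{2k}). -/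
open Finset

lemma heckeB_nonneg (L : List ℕ) (m : ℕ) : 0 ≤ heckeB L m := by
  induction L generalizing m with
  | nil => unfold heckeB; split_ifs <;> norm_num
  | cons n L ih => exact sum_nonneg fun m' _ => mul_nonneg (ih m') (Nat.cast_nonneg _)

lemma isSquare_of_isSquare_mul_mul_self {x d : ℕ} (hd : d ≠ 0) (h : IsSquare (x * (d * d))) :
    IsSquare x := by
  obtain ⟨e, he⟩ := h
  obtain ⟨c, rfl⟩ : d ∣ e := (Nat.pow_dvd_pow_iff two_ne_zero).mp ⟨x, by rw [sq, sq, ← he]; ring⟩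
  exact ⟨c, Nat.eq_of_mul_eq_mul_right (m := d * d) (by positivity) (by rw [he]; ring)⟩

lemma isSquare_prod_mul_of_heckeB_ne_zero {L : List ℕ} {m : ℕ} (h : heckeB L m ≠ 0) :
    IsSquare (L.prod * m) := by
  induction L generalizing m with
  | nil =>
    unfold heckeB at h
    split_ifs at h with hm
    · simp [hm]
    · exact absurd rfl h
  | cons n L ih =>
    obtain ⟨m', -, hm'⟩ := exists_ne_zero_of_sum_ne_zero h
    have hcard := right_ne_zero_of_mul hm'
    rw [Nat.cast_ne_zero, card_ne_zero] at hcard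
    obtain ⟨d, hd⟩ := hcard
    rw [mem_filter] at hd
    obtain ⟨s, hs⟩ := ih (left_ne_zero_of_mul hm')
    refine isSquare_of_isSquare_mul_mul_self (Nat.pos_of_mem_divisors hd.1).ne' ⟨n * s, ?_⟩
    calc (n :: L).prod * m * (d * d) = L.prod * (m * (d * d)) * n := by
          simp only [List.prod_cons]; ring
      _ = L.prod * m' * (n * n) := by rw [← hd.2]; ring
      _ = n * s * (n * s) := by rw [hs]; ring

lemma sum_card_filter_mul_eq_mul_mul_self_le (s : Finset ℕ) {n : ℕ} (hn : n ≠ 0) (m' : ℕ) :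
    ∑ m ∈ s, #{d ∈ (n.gcd m').divisors | n * m' = m * (d * d)} ≤ #n.divisors := by
  refine (sum_card_bipartiteAbove_eq_sum_card_bipartiteBelow (s := s) (t := (n.gcd m').divisors)
    (fun m d => n * m' = m * (d * d))).trans_le ?_
  calc ∑ d ∈ (n.gcd m').divisors, #{m ∈ s | n * m' = m * (d * d)}
      ≤ ∑ d ∈ (n.gcd m').divisors, 1 := by
        refine sum_le_sum fun d hd => card_le_one.mpr fun m₁ h₁ m₂ h₂ => ?_
        have hd0 : 0 < d * d := by have := Nat.pos_of_mem_divisors hd; positivity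
        exact Nat.eq_of_mul_eq_mul_right hd0
          ((mem_filter.mp h₁).2.symm.trans (mem_filter.mp h₂).2)
    _ = #(n.gcd m').divisors := by rw [card_eq_sum_ones]
    _ ≤ #n.divisors := card_le_card (Nat.divisors_subset_of_dvd hn (Nat.gcd_dvd_left n m'))

lemma sum_heckeB_le_prod_card_divisors {L : List ℕ} (hL : ∀ n ∈ L, n ≠ 0) :
    ∑ m ∈ L.prod.divisors, heckeB L m ≤ (L.map fun n => (#n.divisors : ℤ)).prod := by
  induction L with
  | nil => simp [heckeB]
  | cons n L ih =>
    rw [List.forall_mem_cons] at hL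
    calc ∑ m ∈ (n :: L).prod.divisors, heckeB (n :: L) m
        = ∑ m' ∈ L.prod.divisors, heckeB L m' * ∑ m ∈ (n :: L).prod.divisors,
            (#{d ∈ (n.gcd m').divisors | n * m' = m * (d * d)} : ℤ) := by
          simp only [heckeB, mul_sum]
          exact sum_comm
      _ ≤ ∑ m' ∈ L.prod.divisors, heckeB L m' * #n.divisors := by
          gcongr with m'
          · exact heckeB_nonneg L m'
          · exact_mod_cast sum_card_filter_mul_eq_mul_mul_self_le _ hL.1 m'
      _ = #n.divisors * ∑ m' ∈ L.prod.divisors, heckeB L m' := by rw [← sum_mul, mul_comm]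
      _ ≤ (List.map (fun n => (#n.divisors : ℤ)) (n :: L)).prod := by
          rw [List.map_cons, List.prod_cons]
          gcongr
          exact ih hL.2

lemma heckeB_one_le_two_pow {L : List ℕ} (hL : ∀ p ∈ L, p.Prime) : heckeB L 1 ≤ 2 ^ L.length := by
  have hprod : L.prod ≠ 0 := List.prod_ne_zero fun h0 => Nat.not_prime_zero (hL 0 h0)
  calc heckeB L 1 ≤ ∑ m ∈ L.prod.divisors, heckeB L m :=
        single_le_sum (fun m _ => heckeB_nonneg L m) (Nat.one_mem_divisors.mpr hprod)
    _ ≤ (L.map fun n => (#n.divisors : ℤ)).prod :=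
        sum_heckeB_le_prod_card_divisors fun p hp => (hL p hp).ne_zero
    _ = 2 ^ L.length := by
        rw [List.map_congr_left fun p hp => by
            rw [(hL p hp).divisors, card_pair (hL p hp).one_lt.ne],
          List.map_const', List.prod_replicate]
        norm_num

lemma isSquare_prod_of_heckeB_ofFn_ne_zero {n : ℕ} {f : Fin n → ℕ}
    (h : heckeB (List.ofFn f) 1 ≠ 0) : IsSquare (∏ i, f i) := by
  simpa [List.prod_ofFn] using isSquare_prod_mul_of_heckeB_ne_zero h

lemma prod_mul_heckeB_ofFn_one_le {n : ℕ} {f : Fin n → ℕ} (hf : ∀ i, (f i).Prime) (α : ℕ → ℝ) :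
    (∏ i, α (f i)) * (heckeB (List.ofFn f) 1 : ℝ) ≤ 2 ^ n * ∏ i, |α (f i)| := by
  have hb : (heckeB (List.ofFn f) 1 : ℝ) ≤ 2 ^ n := by
    simpa using (Int.cast_le (R := ℝ)).mpr (heckeB_one_le_two_pow (L := List.ofFn f) (by simpa))
  calc (∏ i, α (f i)) * (heckeB (List.ofFn f) 1 : ℝ)
      ≤ |∏ i, α (f i)| * 2 ^ n :=
        mul_le_mul (le_abs_self _) hb (Int.cast_nonneg_iff.mpr (heckeB_nonneg _ _)) (abs_nonneg _)
    _ = 2 ^ n * ∏ i, |α (f i)| := by rw [abs_prod, mul_comm]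

lemma exists_succ_eq_zero_of_isSquare_prod {n : ℕ} {f : Fin (n + 1) → ℕ} (hf : ∀ i, (f i).Prime)
    (h : IsSquare (∏ i, f i)) : ∃ j : Fin n, f j.succ = f 0 := by
  obtain ⟨r, hr⟩ := h
  rw [Fin.prod_univ_succ] at hr
  have hp := hf 0
  obtain ⟨t, rfl⟩ : f 0 ∣ r := (hp.dvd_mul.mp ⟨_, hr.symm⟩).elim id id
  have hdvd : f 0 ∣ ∏ j : Fin n, f j.succ :=
    ⟨t * t, Nat.eq_of_mul_eq_mul_left hp.pos (by rw [hr]; ring)⟩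
  obtain ⟨j, -, hj⟩ := (Prime.dvd_finsetProd_iff hp.prime _).mp hdvd
  exact ⟨j, ((Nat.prime_dvd_prime_iff_eq hp (hf _)).mp hj).symm⟩

/-- The tuple `a, g₀, …, g_{n-1}` with a second copy of `a` inserted at position `j + 1`. -/
def consPair {α : Type*} {n : ℕ} (j : Fin (n + 1)) (a : α) (g : Fin n → α) : Fin (n + 2) → α :=
  Fin.cons a (j.insertNth a g)

lemma prod_consPair {α M : Type*} [CommMonoid M] {n : ℕ} (φ : α → M) (j : Fin (n + 1)) (a : α)
    (g : Fin n → α) : ∏ i, φ (consPair j a g i) = φ a ^ 2 * ∏ i, φ (g i) := by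
  rw [Fin.prod_univ_succ]
  simp only [consPair, Fin.cons_zero, Fin.cons_succ]
  rw [Fin.prod_univ_succAbove _ j]
  simp only [Fin.insertNth_apply_same, Fin.insertNth_apply_succAbove]
  rw [sq, mul_assoc]

def squareTuples (P : Finset ℕ) (n : ℕ) : Finset (Fin n → ℕ) :=
  {f ∈ Fintype.piFinset fun _ => P | IsSquare (∏ i, f i)}

lemma squareTuples_subset_image {P : Finset ℕ} (hP : ∀ p ∈ P, p.Prime) (n : ℕ) :
    squareTuples P (n + 2) ⊆
      (univ ×ˢ P ×ˢ squareTuples P n).image fun x => consPair x.1 x.2.1 x.2.2 := by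
  intro f hf
  simp only [squareTuples, mem_filter, Fintype.mem_piFinset] at hf
  obtain ⟨hfP, hsq⟩ := hf
  obtain ⟨j, hj⟩ := exists_succ_eq_zero_of_isSquare_prod (fun i => hP _ (hfP i)) hsq
  have htail : j.insertNth (f 0) (j.removeNth (Fin.tail f)) = Fin.tail f := by
    rw [← hj]
    exact Fin.insertNth_self_removeNth j (Fin.tail f)
  have hf : consPair j (f 0) (j.removeNth (Fin.tail f)) = f := by
    rw [consPair, htail, Fin.cons_self_tail]
  refine mem_image.mpr ⟨(j, f 0, j.removeNth (Fin.tail f)), ?_, hf⟩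
  simp only [mem_product, mem_univ, true_and, squareTuples, mem_filter, Fintype.mem_piFinset]
  refine ⟨hfP 0, fun i => hfP _, isSquare_of_isSquare_mul_mul_self (hP _ (hfP 0)).ne_zero ?_⟩
  have hprod := prod_consPair (fun x : ℕ => x) j (f 0) (j.removeNth (Fin.tail f))
  rw [hf, sq] at hprod
  rwa [hprod, mul_comm] at hsq

lemma sum_squareTuples_add_two_le {P : Finset ℕ} (hP : ∀ p ∈ P, p.Prime) {β : ℕ → ℝ}
    (hβ : ∀ p, 0 ≤ β p) (n : ℕ) :
    ∑ f ∈ squareTuples P (n + 2), ∏ i, β (f i)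
      ≤ (n + 1) * (∑ p ∈ P, β p ^ 2) * ∑ g ∈ squareTuples P n, ∏ i, β (g i) := by
  have hnonneg : ∀ f : Fin (n + 2) → ℕ, 0 ≤ ∏ i, β (f i) := fun f => prod_nonneg fun i _ => hβ _
  calc ∑ f ∈ squareTuples P (n + 2), ∏ i, β (f i)
      ≤ ∑ f ∈ (univ ×ˢ P ×ˢ squareTuples P n).image (fun x => consPair x.1 x.2.1 x.2.2),
          ∏ i, β (f i) :=
        sum_le_sum_of_subset_of_nonneg (squareTuples_subset_image hP n) fun f _ _ => hnonneg f
    _ ≤ ∑ x ∈ univ ×ˢ P ×ˢ squareTuples P n, ∏ i, β (consPair x.1 x.2.1 x.2.2 i) :=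
        sum_image_le_of_nonneg fun f _ => hnonneg f
    _ = (n + 1) * (∑ p ∈ P, β p ^ 2) * ∑ g ∈ squareTuples P n, ∏ i, β (g i) := by
        simp only [prod_consPair, sum_product, ← mul_sum, ← sum_mul, sum_const, card_univ,
          Fintype.card_fin, nsmul_eq_mul]
        push_cast
        ring

lemma factorial_two_mul_succ_div (k : ℕ) :
    ((2 * (k + 1)).factorial / (k + 1).factorial : ℝ)
      = 2 * (2 * k + 1) * ((2 * k).factorial / k.factorial) := by
  rw [show 2 * (k + 1) = 2 * k + 1 + 1 by ring, Nat.factorial_succ, Nat.factorial_succ,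
    Nat.factorial_succ]
  push_cast
  field_simp
  ring

lemma sum_squareTuples_two_mul_le {P : Finset ℕ} (hP : ∀ p ∈ P, p.Prime) {β : ℕ → ℝ}
    (hβ : ∀ p, 0 ≤ β p) (k : ℕ) :
    ∑ f ∈ squareTuples P (2 * k), ∏ i, β (f i)
      ≤ ((2 * k).factorial / k.factorial : ℝ) * (∑ p ∈ P, β p ^ 2) ^ k := by
  induction k with
  | zero => simpa using card_le_one_of_subsingleton _
  | succ k ih =>
    set S := ∑ p ∈ P, β p ^ 2
    have hS : 0 ≤ S := sum_nonneg fun p _ => sq_nonneg _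
    calc ∑ f ∈ squareTuples P (2 * (k + 1)), ∏ i, β (f i)
        ≤ (2 * k + 1) * S * ∑ g ∈ squareTuples P (2 * k), ∏ i, β (g i) := by
          rw [show 2 * (k + 1) = 2 * k + 2 by ring]
          exact_mod_cast sum_squareTuples_add_two_le hP hβ (2 * k)
      _ ≤ (2 * k + 1) * S * ((2 * k).factorial / k.factorial * S ^ k) := by gcongr
      _ ≤ 2 * (2 * k + 1) * ((2 * k).factorial / k.factorial) * S ^ (k + 1) := by
          rw [pow_succ]
          have : (0 : ℝ) ≤ (2 * k + 1) * ((2 * k).factorial / k.factorial) * (S ^ k * S) := by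
            positivity
          linarith
      _ = _ := by rw [factorial_two_mul_succ_div]

theorem stmt_12_general (k : ℕ) (y z : ℝ) (α : ℕ → ℝ) :
    ∑ f ∈ Fintype.piFinset
        (fun _ : Fin (2 * k) => Finset.filter Nat.Prime (Finset.Icc ⌈y⌉₊ ⌊z⌋₊)),
        (∏ i, α (f i)) * (heckeB (List.ofFn f) 1 : ℝ)
      ≤ 2 ^ (2 * k) * ((Nat.factorial (2 * k) : ℝ) / (Nat.factorial k : ℝ)) *
        (∑ p ∈ Finset.filter Nat.Prime (Finset.Icc ⌈y⌉₊ ⌊z⌋₊), (α p) ^ 2) ^ k := by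
  set P := Finset.filter Nat.Prime (Finset.Icc ⌈y⌉₊ ⌊z⌋₊)
  have hP : ∀ p ∈ P, p.Prime := fun p hp => (mem_filter.mp hp).2
  have hsupport : ∀ f ∈ Fintype.piFinset fun _ : Fin (2 * k) => P,
      (∏ i, α (f i)) * (heckeB (List.ofFn f) 1 : ℝ) ≠ 0 → IsSquare (∏ i, f i) :=
    fun f _ hf => isSquare_prod_of_heckeB_ofFn_ne_zero (by exact_mod_cast right_ne_zero_of_mul hf)
  rw [← sum_filter_of_ne hsupport]
  calc ∑ f ∈ squareTuples P (2 * k), (∏ i, α (f i)) * (heckeB (List.ofFn f) 1 : ℝ)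
      ≤ ∑ f ∈ squareTuples P (2 * k), 2 ^ (2 * k) * ∏ i, |α (f i)| := by
        refine sum_le_sum fun f hf => prod_mul_heckeB_ofFn_one_le (fun i => hP _ ?_) α
        exact Fintype.mem_piFinset.mp (mem_filter.mp hf).1 i
    _ = 2 ^ (2 * k) * ∑ f ∈ squareTuples P (2 * k), ∏ i, |α (f i)| := (mul_sum _ _ _).symm
    _ ≤ 2 ^ (2 * k) * (((2 * k).factorial / k.factorial : ℝ) * (∑ p ∈ P, |α p| ^ 2) ^ k) := by
        gcongr
        exact sum_squareTuples_two_mul_le hP (fun p => abs_nonneg (α p)) k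
    _ = _ := by simp only [sq_abs, mul_assoc]

theorem stmt_12 (k : ℕ) (hk : 1 ≤ k) (y z : ℝ) (hy : 2 ≤ y) (hyz : y ≤ z) (α : ℕ → ℝ) :
    ∑ f ∈ Fintype.piFinset
        (fun _ : Fin (2 * k) => Finset.filter Nat.Prime (Finset.Icc ⌈y⌉₊ ⌊z⌋₊)),
        (∏ i, α (f i)) * (heckeB (List.ofFn f) 1 : ℝ)
      ≤ 2 ^ (2 * k) * ((Nat.factorial (2 * k) : ℝ) / (Nat.factorial k : ℝ)) *
        (∑ p ∈ Finset.filter Nat.Prime (Finset.Icc ⌈y⌉₊ ⌊z⌋₊), (α p) ^ 2) ^ k :=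
  stmt_12_general k y z α
end
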